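/- Let X be a random variable with support N_n = {1,…,n}, n ≥ 3, and p_1 ≥ … ≥ p_n > 0, with binary partition random variables (A_⟨α⟩, ⟨α⟩ ∈ Ω). Fix i with 2 ≤ i ≤ n and let ⟨α⟩ ∈ Ω satisfy H(A_⟨α⟩ | (A_⟨{j}⟩ : i < j ≤ n)) > 0. Then equality H(A_⟨{i}⟩) = H(A_⟨α⟩) holds if and only if A_⟨α⟩ is an indicator random variable detecting some element ℓ ∈ N_n with p_ℓ = p_i. -/

import Mathlib

open scoped BigOperators

/-- Probability of an event under a pmf `μ` on a finite outcome space. -/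
noncomputable def probOf {Ω : Type*} [Fintype Ω] (μ : Ω → ℝ) (E : Set Ω) : ℝ :=
  ∑ ω, E.indicator μ ω

/-- Shannon entropy (in bits) of the random variable `X` on the finite
probability space `(Ω, μ)`. -/
noncomputable def shEntropy {Ω : Type*} {S : Type*} [Fintype Ω] (μ : Ω → ℝ) (X : Ω → S) : ℝ :=
  ∑ ω, μ ω * (- Real.logb 2 (probOf μ {ω' | X ω' = X ω}))

/-- Conditional Shannon entropy `H(Y | X)` (in bits). -/
noncomputable def shCondEntropy {Ω S T : Type*} [Fintype Ω] (μ : Ω → ℝ)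
    (Y : Ω → T) (X : Ω → S) : ℝ :=
  shEntropy μ (fun ω => (X ω, Y ω)) - shEntropy μ X

/-- The support of the random variable `X` (values taken with positive probability). -/
noncomputable def rvSupport {Ω S : Type*} [Fintype Ω] (μ : Ω → ℝ) (X : Ω → S) : Finset S := by
  classical exact (Finset.univ.filter fun ω => 0 < μ ω).image X

/-- `μ` is a probability mass function. -/
def IsPMF {Ω : Type*} [Fintype Ω] (μ : Ω → ℝ) : Prop :=
  (∀ ω, 0 ≤ μ ω) ∧ ∑ ω, μ ω = 1

/-- A polymatroid on the finite ground set `Z`. -/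
def IsPolymatroid {Z : Type*} [DecidableEq Z] (h : Finset Z → ℝ) : Prop :=
  h ∅ = 0 ∧ (∀ A : Finset Z, 0 ≤ h A) ∧ (∀ A B : Finset Z, A ⊆ B → h A ≤ h B) ∧
    ∀ A B : Finset Z, h (A ∩ B) + h (A ∪ B) ≤ h A + h B

/-- The binary partition random variable `A_⟨α⟩` of a random variable on
`Fin n` (the probability space is taken to be `Fin n` itself, with `X` the
identity): `A_⟨α⟩` records whether `X ∈ α` or `X ∈ αᶜ`.  Unordered partitions
`⟨α⟩ = {α, αᶜ}` are represented by the part `α` not containing the first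
element `0` (the paper's convention `1 ∉ α`). -/
def bpVar {n : ℕ} (α : Finset (Fin n)) : Fin n → Bool := fun x => decide (x ∈ α)

/-!
For a binary partition the entropy is `h(P(α)) / log 2`, with `h` the binary entropy
function, which is injective on `[0, 1/2]` and symmetric under `t ↦ 1 - t`. Since `0`, `i` and
a third point carry positive mass, `p i < 1/2`, so equality of entropies means `P(α) = p i`
or `P(αᶜ) = p i`. The conditional-entropy hypothesis forces `α` to meet `{k | k ≤ i}`: otherwise
`A_⟨α⟩` would be a function of the indicators `A_⟨{j}⟩`, `j > i`. So `α` contains some `k` with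
`p k ≥ p i`, and `αᶜ` contains `0` with `p 0 ≥ p i`; positivity of the masses then makes the
relevant part a singleton.
-/

open Finset

lemma Real.eq_or_eq_one_sub_of_binEntropy_eq {a b : ℝ} (ha : a ∈ Set.Icc 0 2⁻¹)
    (hb₀ : 0 ≤ b) (hb₁ : b ≤ 1) (h : Real.binEntropy a = Real.binEntropy b) :
    b = a ∨ b = 1 - a := by
  rcases le_or_gt b 2⁻¹ with hb | hb
  · exact Or.inl (Real.binEntropy_strictMonoOn.injOn ha ⟨hb₀, hb⟩ h).symm
  · have := Real.binEntropy_strictMonoOn.injOn ha ⟨by linarith, by linarith⟩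
      (h.trans (Real.binEntropy_one_sub b).symm)
    exact Or.inr (by linarith)

lemma Finset.eq_singleton_of_sum_le {ι : Type*} {s : Finset ι} {f : ι → ℝ} {k : ι}
    (hf : ∀ x ∈ s, 0 < f x) (hk : k ∈ s) (h : ∑ x ∈ s, f x ≤ f k) : s = {k} := by
  refine eq_singleton_iff_unique_mem.2 ⟨hk, fun j hj => ?_⟩
  by_contra hjk
  exact (single_lt_sum hjk hk hj (hf j hj) fun x hx _ => (hf x hx).le).not_ge h

section PMF

variable {ι : Type*} [Fintype ι] [DecidableEq ι] {p : ι → ℝ}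

lemma sum_compl_eq_one_sub (hsum : ∑ x, p x = 1) (s : Finset ι) :
    ∑ x ∈ sᶜ, p x = 1 - ∑ x ∈ s, p x := by
  rw [← hsum, ← sum_compl_add_sum s]
  ring

lemma binEntropy_sum_compl (hsum : ∑ x, p x = 1) (s : Finset ι) :
    Real.binEntropy (∑ x ∈ sᶜ, p x) = Real.binEntropy (∑ x ∈ s, p x) := by
  rw [sum_compl_eq_one_sub hsum, Real.binEntropy_one_sub]

lemma add_lt_one_of_ne (hp : ∀ x, 0 < p x) (hsum : ∑ x, p x = 1)
    (hcard : 3 ≤ Fintype.card ι) {a b : ι} (hab : a ≠ b) : p a + p b < 1 := by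
  obtain ⟨m, -, hm⟩ := exists_mem_notMem_of_card_lt_card (s := {a, b}) (t := univ)
    (by rw [card_univ]; exact card_le_two.trans_lt (by omega))
  rw [← sum_pair hab, ← hsum]
  exact sum_lt_sum_of_subset (subset_univ _) (mem_univ m) hm (hp m) fun j _ _ => (hp j).le

end PMF

lemma probOf_coe_finset {Ω : Type*} [Fintype Ω] (μ : Ω → ℝ) (s : Finset Ω) :
    probOf μ ↑s = ∑ x ∈ s, μ x := by
  classical
  simp [probOf, Set.indicator_apply, sum_ite_mem]

lemma shEntropy_decide_mem {Ω : Type*} [Fintype Ω] [DecidableEq Ω] {μ : Ω → ℝ}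
    (hμ : ∑ ω, μ ω = 1) (s : Finset Ω) :
    shEntropy μ (fun ω => decide (ω ∈ s)) = Real.binEntropy (∑ ω ∈ s, μ ω) / Real.log 2 := by
  have sum_over_s : ∑ ω ∈ s, μ ω * -Real.logb 2 (probOf μ {ω' | decide (ω' ∈ s) = decide (ω ∈ s)})
      = (∑ ω ∈ s, μ ω) * -Real.logb 2 (∑ ω ∈ s, μ ω) := by
    rw [sum_mul, ← probOf_coe_finset μ]
    refine sum_congr rfl fun ω hω => ?_
    congr 4
    ext ω'
    simp [hω]
  have sum_over_compl : ∑ ω ∈ sᶜ, μ ω *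
      -Real.logb 2 (probOf μ {ω' | decide (ω' ∈ s) = decide (ω ∈ s)})
      = (∑ ω ∈ sᶜ, μ ω) * -Real.logb 2 (∑ ω ∈ sᶜ, μ ω) := by
    rw [sum_mul, ← probOf_coe_finset μ]
    refine sum_congr rfl fun ω hω => ?_
    congr 4
    ext ω'
    simp [mem_compl.1 hω]
  rw [shEntropy, ← sum_add_sum_compl s, sum_over_s, sum_over_compl, sum_compl_eq_one_sub hμ]
  simp only [Real.binEntropy, Real.log_inv, Real.logb]
  ring

lemma shEntropy_bpVar {n : ℕ} {p : Fin n → ℝ} (hsum : ∑ i, p i = 1) (α : Finset (Fin n)) :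
    shEntropy p (bpVar α) = Real.binEntropy (∑ x ∈ α, p x) / Real.log 2 :=
  shEntropy_decide_mem hsum α

lemma shCondEntropy_comp_eq_zero {Ω S T : Type*} [Fintype Ω] (μ : Ω → ℝ)
    (X : Ω → S) (f : S → T) :
    shCondEntropy μ (fun ω => f (X ω)) X = 0 := by
  rw [shCondEntropy, shEntropy, shEntropy, sub_eq_zero]
  refine sum_congr rfl fun ω _ => ?_
  have fiber_eq : {ω' | (X ω', f (X ω')) = (X ω, f (X ω))} = {ω' | X ω' = X ω} :=
    Set.ext fun ω' => ⟨fun h => congrArg Prod.fst h, fun h => congrArg (fun y => (y, f y)) h⟩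
  rw [fiber_eq]

lemma shCondEntropy_bpVar_eq_zero_of_forall_mem {n : ℕ} (μ : Fin n → ℝ) (α : Finset (Fin n))
    (P : Fin n → Prop) (h : ∀ x ∈ α, P x) :
    shCondEntropy μ (bpVar α) (fun x (j : {j // P j}) => bpVar {j.1} x) = 0 := by
  classical
  convert shCondEntropy_comp_eq_zero μ (fun x (j : {j // P j}) => bpVar {j.1} x)
    (fun g => decide (∃ j, g j = true ∧ j.1 ∈ α)) using 2
  funext x
  simp only [bpVar, mem_singleton, decide_eq_true_eq, decide_eq_decide]
  exact ⟨fun hx => ⟨⟨x, h x hx⟩, rfl, hx⟩, fun ⟨j, hj, hjα⟩ => hj ▸ hjα⟩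

theorem indicator_entropy_eq_iff_general {n : ℕ} [NeZero n] (hn : 3 ≤ n)
    (p : Fin n → ℝ) (hp : ∀ i, 0 < p i) (hsum : ∑ i, p i = 1)
    (hmono : ∀ i j : Fin n, i ≤ j → p j ≤ p i)
    (i : Fin n) (hi : 1 ≤ i.1)
    (α : Finset (Fin n)) (hα0 : 0 ∉ α)
    (hα : 0 < shCondEntropy p (bpVar α)
        (fun x (j : {j : Fin n // i < j}) => bpVar {j.1} x)) :
    shEntropy p (bpVar {i}) = shEntropy p (bpVar α) ↔
      ∃ ℓ : Fin n, (α = {ℓ} ∨ α = ({ℓ} : Finset (Fin n))ᶜ) ∧ p ℓ = p i := by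
  obtain ⟨k, hkα, hki⟩ : ∃ k ∈ α, k ≤ i := by
    by_contra! h
    exact hα.ne' (shCondEntropy_bpVar_eq_zero_of_forall_mem p α _ h)
  have hpi0 : p i ≤ p 0 := hmono 0 i (Fin.zero_le i)
  have hpi_half : p i < 2⁻¹ := by
    have := add_lt_one_of_ne hp hsum (by simpa using hn) (a := 0) (b := i)
      fun h => by simp [← h] at hi
    linarith
  rw [shEntropy_bpVar hsum, shEntropy_bpVar hsum, sum_singleton,
    div_left_inj' (Real.log_pos one_lt_two).ne']
  constructor
  · intro h
    rcases Real.eq_or_eq_one_sub_of_binEntropy_eq ⟨(hp i).le, hpi_half.le⟩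
      (sum_nonneg fun x _ => (hp x).le)
      (hsum ▸ sum_le_univ_sum_of_nonneg fun x => (hp x).le) h with hs | hs
    · have hαk : α = {k} := eq_singleton_of_sum_le (fun x _ => hp x) hkα (hs ▸ hmono k i hki)
      rw [hαk, sum_singleton] at hs
      exact ⟨k, Or.inl hαk, hs⟩
    · have hcompl := sum_compl_eq_one_sub hsum α
      rw [hs, sub_sub_cancel] at hcompl
      have hα0c : αᶜ = {0} := eq_singleton_of_sum_le (fun x _ => hp x) (mem_compl.2 hα0)
        (hcompl ▸ hpi0)
      rw [hα0c, sum_singleton] at hcompl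
      exact ⟨0, Or.inr (eq_compl_comm.2 hα0c.symm), hcompl⟩
  · rintro ⟨ℓ, rfl | rfl, hℓ⟩
    · rw [sum_singleton, hℓ]
    · rw [binEntropy_sum_compl hsum, sum_singleton, hℓ]

/-- Proposition 1(3): in the setting of Statement 12,
equality `H(A_⟨{i}⟩) = H(A_⟨α⟩)` holds iff `A_⟨α⟩` is an indicator random
variable detecting an element `ℓ` with `p_ℓ = p_i`, i.e. iff `α = {ℓ}` or
`α = {ℓ}ᶜ` for some `ℓ` with `p ℓ = p i`. -/
theorem indicator_entropy_eq_iff {n : ℕ} [NeZero n] (hn : 3 ≤ n)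
    (p : Fin n → ℝ) (hp : ∀ i, 0 < p i) (hsum : ∑ i, p i = 1)
    (hmono : ∀ i j : Fin n, i ≤ j → p j ≤ p i)
    (i : Fin n) (hi : 1 ≤ i.1)
    (α : Finset (Fin n)) (hαne : α.Nonempty) (hα0 : 0 ∉ α)
    (hα : 0 < shCondEntropy p (bpVar α)
        (fun x (j : {j : Fin n // i < j}) => bpVar {j.1} x)) :
    shEntropy p (bpVar {i}) = shEntropy p (bpVar α) ↔
      ∃ ℓ : Fin n, (α = {ℓ} ∨ α = ({ℓ} : Finset (Fin n))ᶜ) ∧ p ℓ = p i :=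
  indicator_entropy_eq_iff_general hn p hp hsum hmono i hi α hα0 hα
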